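/- Under Assumption (Lip) and L_p < |𝒳|c_min, for every fixed Q : 𝒳×𝒜 → ℝ the map μ ↦ P^{softmin_φ Q, μ}μ on Δ(𝒳) satisfies ‖P^{softmin_φ Q,μ}μ − P^{softmin_φ Q,μ'}μ'‖₁ ≤ (L_p + 1 − |𝒳|c_min)‖μ − μ'‖₁ with L_p + 1 − |𝒳|c_min < 1, hence has a unique fixed point μ*_Q ∈ Δ(𝒳); moreover Q ↦ μ*_Q is Lipschitz: ‖μ*_Q − μ*_{Q'}‖₁ ≤ (φ|𝒜|/(|𝒳|c_min − L_p))·‖Q − Q'‖∞ for all Q, Q'. -/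

import Mathlib

open Finset Filter
open scoped Classical

noncomputable section

variable {X A : Type*}

/-- A probability vector on a finite set. -/
def IsProb [Fintype X] (μ : X → ℝ) : Prop := (∀ x, 0 ≤ μ x) ∧ ∑ x, μ x = 1

/-- ℓ¹ norm of a signed measure / vector on a finite set. -/
def l1 [Fintype X] (μ : X → ℝ) : ℝ := ∑ x, |μ x|

/-- Sup norm of a Q-table. -/
def supQ [Fintype X] [Fintype A] [Nonempty X] [Nonempty A] (Q : X → A → ℝ) : ℝ :=
  Finset.univ.sup' Finset.univ_nonempty (fun xa : X × A => |Q xa.1 xa.2|)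

/-- Minimum of a row of a Q-table (minimum over actions). -/
def minRow [Fintype A] [Nonempty A] (q : A → ℝ) : ℝ :=
  Finset.univ.inf' Finset.univ_nonempty q

/-- The soft-min distribution over actions with parameter φ. -/
def softmin [Fintype A] (φ : ℝ) (z : A → ℝ) (a : A) : ℝ :=
  Real.exp (-φ * z a) / ∑ a', Real.exp (-φ * z a')

/-- The argmin_e policy: uniform over the minimizers, zero elsewhere. -/
def argminE [Fintype A] [Nonempty A] (q : A → ℝ) (a : A) : ℝ :=
  if q a = minRow q then (1 : ℝ) / (Finset.univ.filter fun a' => q a' = minRow q).card else 0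

/-- (P^{π,μ} ν)(x) = ∑_{x'} ν(x') ∑_a π(a|x') p(x|x',a,μ). -/
def Ppush [Fintype X] [Fintype A] (p : X → A → (X → ℝ) → X → ℝ)
    (π : X → A → ℝ) (μ ν : X → ℝ) (x : X) : ℝ :=
  ∑ x', ν x' * ∑ a, π x' a * p x' a μ x

/-- P₂(Q,μ) = P^{softmin_φ Q, μ} μ − μ. -/
def P2 [Fintype X] [Fintype A] (φ : ℝ) (p : X → A → (X → ℝ) → X → ℝ)
    (Q : X → A → ℝ) (μ : X → ℝ) (x : X) : ℝ :=
  Ppush p (fun x' => softmin φ (Q x')) μ μ x - μ x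

/-- The Bellman operator (B_μ Q)(x,a) = f(x,a,μ) + γ ∑_{x'} p(x'|x,a,μ) min_{a'} Q(x',a'). -/
def bell [Fintype X] [Fintype A] [Nonempty A]
    (f : X → A → (X → ℝ) → ℝ) (p : X → A → (X → ℝ) → X → ℝ) (γ : ℝ)
    (μ : X → ℝ) (Q : X → A → ℝ) (x : X) (a : A) : ℝ :=
  f x a μ + γ * ∑ x', p x a μ x' * minRow (Q x')

/-- T₂(Q,μ) = B_μ Q − Q. -/
def T2 [Fintype X] [Fintype A] [Nonempty A]
    (f : X → A → (X → ℝ) → ℝ) (p : X → A → (X → ℝ) → X → ℝ) (γ : ℝ)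
    (Q : X → A → ℝ) (μ : X → ℝ) (x : X) (a : A) : ℝ :=
  bell f p γ μ Q x a - Q x a

/-
Fix `Q` and let `K_μ` be the transition matrix of the softmin policy in population state `μ`.
Since every entry of `K_μ` is at least `c_min`, Dobrushin's bound gives
`‖(μ - μ') K_μ‖₁ ≤ (1 - |𝒳| c_min) ‖μ - μ'‖₁` (the difference has total mass zero), while
(Lip) gives `‖μ' (K_μ - K_μ')‖₁ ≤ L_p ‖μ - μ'‖₁`; adding the two yields the contraction, and a
contraction has at most one fixed point. For the dependence on `Q`, softmin is
`φ/2`-Lipschitz in each coordinate (mean value theorem along a segment), so replacing `Q` by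
`Q'` moves `μ ↦ μ K_μ` by at most `φ |𝒜| ‖Q - Q'‖∞`, and the usual perturbation bound for fixed
points of contractions divides this by `1 - (L_p + 1 - |𝒳| c_min)`.
-/

lemma eq_of_l1_sub_nonpos [Fintype X] {μ ν : X → ℝ} (h : l1 (μ - ν) ≤ 0) : μ = ν := by
  funext x
  have hx : |μ x - ν x| ≤ l1 (μ - ν) :=
    single_le_sum (f := fun y => |(μ - ν) y|) (fun _ _ => abs_nonneg _) (mem_univ x)
  exact sub_eq_zero.1 (abs_nonpos_iff.1 (hx.trans h))

lemma l1_add_le [Fintype X] (μ ν : X → ℝ) : l1 (μ + ν) ≤ l1 μ + l1 ν := by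
  rw [l1, l1, l1, ← sum_add_distrib]
  exact sum_le_sum fun x _ => abs_add_le _ _

lemma l1_sub_le_div_of_isFixedPt [Fintype X] {F G : (X → ℝ) → X → ℝ} {μ μ' : X → ℝ} {k ε : ℝ}
    (hk : k < 1) (hF : l1 (F μ - F μ') ≤ k * l1 (μ - μ')) (hε : l1 (F μ' - G μ') ≤ ε)
    (hμ : Function.IsFixedPt F μ) (hμ' : Function.IsFixedPt G μ') :
    l1 (μ - μ') ≤ ε / (1 - k) := by
  have htri : l1 (μ - μ') ≤ k * l1 (μ - μ') + ε := by
    have hdecomp : μ - μ' = (F μ - F μ') + (F μ' - G μ') := by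
      rw [sub_add_sub_cancel, hμ.eq, hμ'.eq]
    have h : l1 (μ - μ') ≤ l1 (F μ - F μ') + l1 (F μ' - G μ') := by
      rw [hdecomp]; exact l1_add_le _ _
    linarith
  rw [le_div_iff₀ (sub_pos.2 hk)]
  linarith

open Matrix

lemma l1_vecMul_le {ι κ : Type*} [Fintype ι] [Fintype κ] (v : ι → ℝ) (M : Matrix ι κ ℝ) :
    l1 (v ᵥ* M) ≤ ∑ i, |v i| * l1 (M i) :=
  calc l1 (v ᵥ* M) ≤ ∑ j, ∑ i, |v i| * |M i j| :=
        sum_le_sum fun j _ => (abs_sum_le_sum_abs _ _).trans_eq (by simp only [abs_mul])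
    _ = ∑ i, |v i| * l1 (M i) := by rw [sum_comm]; simp only [l1, mul_sum]

lemma l1_vecMul_sub_vecMul_le [Fintype X] {ν : X → ℝ} {K K' : Matrix X X ℝ} {B : ℝ}
    (hν : ∀ i, 0 ≤ ν i) (hB : ∀ i, l1 (K i - K' i) ≤ B) :
    l1 (ν ᵥ* K - ν ᵥ* K') ≤ (∑ i, ν i) * B := by
  rw [← vecMul_sub, sum_mul]
  refine (l1_vecMul_le ν (K - K')).trans (sum_le_sum fun i _ => ?_)
  rw [abs_of_nonneg (hν i)]
  exact mul_le_mul_of_nonneg_left (hB i) (hν i)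

/-- Dobrushin's contraction bound. -/
lemma l1_vecMul_le_of_sum_eq_zero [Fintype X] {K : Matrix X X ℝ} {c : ℝ} {d : X → ℝ}
    (hK : ∀ i j, c ≤ K i j) (hrow : ∀ i, ∑ j, K i j = 1) (hd : ∑ i, d i = 0) :
    l1 (d ᵥ* K) ≤ (1 - Fintype.card X * c) * l1 d := by
  set C : Matrix X X ℝ := of fun _ _ => c
  have hC : d ᵥ* C = 0 := by
    ext j
    simp only [C, vecMul, dotProduct, of_apply, ← sum_mul, hd, zero_mul, Pi.zero_apply]
  have hrow' : ∀ i, l1 ((K - C) i) = 1 - Fintype.card X * c := fun i => by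
    simp only [l1, Matrix.sub_apply, C, of_apply]
    rw [sum_congr rfl fun j _ => abs_of_nonneg (sub_nonneg.2 (hK i j)), sum_sub_distrib, hrow]
    simp
  calc l1 (d ᵥ* K) = l1 (d ᵥ* (K - C)) := by rw [vecMul_sub, hC, sub_zero]
    _ ≤ ∑ i, |d i| * l1 ((K - C) i) := l1_vecMul_le d _
    _ = (1 - Fintype.card X * c) * l1 d := by
          simp only [hrow']; rw [l1, mul_sum]; exact sum_congr rfl fun i _ => mul_comm _ _

lemma l1_vecMul_sub_vecMul_le_of_stochastic [Fintype X] {K K' : Matrix X X ℝ} {μ μ' : X → ℝ}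
    {c L : ℝ} (hμ : IsProb μ) (hμ' : IsProb μ') (hK : ∀ i j, c ≤ K i j)
    (hrow : ∀ i, ∑ j, K i j = 1) (hL : ∀ i, l1 (K i - K' i) ≤ L * l1 (μ - μ')) :
    l1 (μ ᵥ* K - μ' ᵥ* K') ≤ (L + 1 - Fintype.card X * c) * l1 (μ - μ') := by
  have hsplit : μ ᵥ* K - μ' ᵥ* K' = (μ - μ') ᵥ* K + (μ' ᵥ* K - μ' ᵥ* K') := by
    rw [sub_vecMul]; abel
  have hd : ∑ i, (μ - μ') i = 0 := by simp [sum_sub_distrib, hμ.2, hμ'.2]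
  have hdrift := l1_vecMul_sub_vecMul_le hμ'.1 hL
  rw [hμ'.2, one_mul] at hdrift
  rw [hsplit]
  linarith [l1_add_le ((μ - μ') ᵥ* K) (μ' ᵥ* K - μ' ᵥ* K'), l1_vecMul_le_of_sum_eq_zero hK hrow hd]

lemma softmin_isProb [Fintype A] [Nonempty A] (φ : ℝ) (z : A → ℝ) : IsProb (softmin φ z) := by
  have hD : 0 < ∑ a, Real.exp (-φ * z a) := sum_pos (fun _ _ => Real.exp_pos _) univ_nonempty
  refine ⟨fun a => div_nonneg (Real.exp_pos _).le hD.le, ?_⟩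
  unfold softmin
  rw [← sum_div, div_self hD.ne']

lemma hasDerivAt_softmin_line [Fintype A] [Nonempty A] (φ : ℝ) (z d : A → ℝ) (a : A) (t : ℝ) :
    HasDerivAt (fun s => softmin φ (fun b => z b + s * d b) a)
      (φ * softmin φ (fun b => z b + t * d b) a *
        ∑ b, softmin φ (fun b => z b + t * d b) b * (d b - d a)) t := by
  set u : A → ℝ → ℝ := fun b s => Real.exp (-φ * (z b + s * d b))
  have hu : ∀ b, HasDerivAt (u b) (u b t * (-φ * d b)) t := fun b =>
    (((hasDerivAt_id t).mul_const (d b)).const_add (z b) |>.const_mul (-φ)).exp.congr_deriv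
      (by simp [u])
  have hD : HasDerivAt (fun s => ∑ b, u b s) (∑ b, u b t * (-φ * d b)) t :=
    HasDerivAt.fun_sum fun b _ => hu b
  have hpos : 0 < ∑ b, u b t := sum_pos (fun _ _ => Real.exp_pos _) univ_nonempty
  refine HasDerivAt.congr_deriv (f := fun s => u a s / ∑ b, u b s) ((hu a).div hD hpos.ne') ?_
  have hσ : ∀ b, softmin φ (fun b => z b + t * d b) b = u b t / ∑ c, u c t := fun _ => rfl
  have hsum : ∑ b, softmin φ (fun b => z b + t * d b) b * (d b - d a)
      = (∑ b, u b t * d b - d a * ∑ b, u b t) / ∑ b, u b t := by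
    rw [mul_sum, ← sum_sub_distrib, sum_div]
    exact sum_congr rfl fun b _ => by rw [hσ b]; field_simp
  have hlin : ∑ b, u b t * (-φ * d b) = -φ * ∑ b, u b t * d b := by
    rw [mul_sum]; exact sum_congr rfl fun b _ => by ring
  rw [hsum, hσ a, hlin]
  field_simp
  ring

lemma mul_abs_sum_mul_sub_le [Fintype A] {w d : A → ℝ} {δ : ℝ} (hw : IsProb w)
    (hd : ∀ b, |d b| ≤ δ) (a : A) : w a * |∑ b, w b * (d b - d a)| ≤ δ / 2 := by
  have hspread : |∑ b, w b * (d b - d a)| ≤ 2 * δ * (1 - w a) :=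
    calc |∑ b, w b * (d b - d a)| ≤ ∑ b, w b * |d b - d a| := by
          refine (abs_sum_le_sum_abs _ _).trans_eq (sum_congr rfl fun b _ => ?_)
          rw [abs_mul, abs_of_nonneg (hw.1 b)]
      _ = ∑ b ∈ univ.erase a, w b * |d b - d a| := (sum_erase _ (by simp)).symm
      _ ≤ ∑ b ∈ univ.erase a, w b * (2 * δ) := sum_le_sum fun b _ =>
          mul_le_mul_of_nonneg_left ((abs_sub _ _).trans (by linarith [hd a, hd b])) (hw.1 b)
      _ = 2 * δ * (1 - w a) := by
          rw [← sum_mul, sum_erase_eq_sub (mem_univ a), hw.2]; ring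
  have hδ : 0 ≤ δ := (abs_nonneg _).trans (hd a)
  nlinarith [mul_le_mul_of_nonneg_left hspread (hw.1 a), sq_nonneg (2 * w a - 1)]

lemma abs_softmin_sub_softmin_le [Fintype A] [Nonempty A] {φ δ : ℝ} (hφ : 0 ≤ φ)
    {z z' : A → ℝ} (h : ∀ b, |z b - z' b| ≤ δ) (a : A) :
    |softmin φ z a - softmin φ z' a| ≤ φ * δ / 2 := by
  have hline := norm_image_sub_le_of_norm_deriv_le_segment_01'
    (f := fun s => softmin φ (fun b => z b + s * (z' b - z b)) a) (C := φ * (δ / 2))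
    (fun t _ => (hasDerivAt_softmin_line φ z (z' - z) a t).hasDerivWithinAt) fun t _ => by
      rw [Real.norm_eq_abs, abs_mul, abs_mul, abs_of_nonneg hφ, mul_assoc,
        abs_of_nonneg ((softmin_isProb φ _).1 a)]
      exact mul_le_mul_of_nonneg_left (mul_abs_sum_mul_sub_le (softmin_isProb φ _)
        (fun b => by rw [Pi.sub_apply, abs_sub_comm]; exact h b) a) hφ
  simpa [abs_sub_comm, mul_div_assoc] using hline

lemma abs_le_supQ [Fintype X] [Fintype A] [Nonempty X] [Nonempty A] (Q : X → A → ℝ) (x : X)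
    (a : A) : |Q x a| ≤ supQ Q :=
  le_sup' (fun xa : X × A => |Q xa.1 xa.2|) (mem_univ (x, a))

lemma supQ_nonneg [Fintype X] [Fintype A] [Nonempty X] [Nonempty A] (Q : X → A → ℝ) :
    0 ≤ supQ Q :=
  (abs_nonneg _).trans (abs_le_supQ Q (Classical.arbitrary X) (Classical.arbitrary A))

lemma abs_softmin_sub_softmin_le_supQ [Fintype X] [Fintype A] [Nonempty X] [Nonempty A] {φ : ℝ}
    (hφ : 0 ≤ φ) (Q Q' : X → A → ℝ) (x : X) (a : A) :
    |softmin φ (Q x) a - softmin φ (Q' x) a| ≤ φ * supQ fun x a => Q x a - Q' x a :=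
  (abs_softmin_sub_softmin_le hφ (abs_le_supQ (fun x a => Q x a - Q' x a) x) a).trans
    (half_le_self (mul_nonneg hφ (supQ_nonneg _)))

section transMatrix

variable [Fintype X] [Fintype A] {p : X → A → (X → ℝ) → X → ℝ} {π π' : X → A → ℝ}
  {μ μ' : X → ℝ}

/-- Entry `(x', x)` is the probability of moving from `x'` to `x` under the policy `π` in the
population state `μ`, so that `Ppush p π μ ν` is definitionally `ν ᵥ* transMatrix p π μ`. -/
def transMatrix (p : X → A → (X → ℝ) → X → ℝ) (π : X → A → ℝ) (μ : X → ℝ) : Matrix X X ℝ :=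
  fun x' x => ∑ a, π x' a * p x' a μ x

omit [Fintype X] in
lemma transMatrix_apply_eq_vecMul (x' : X) :
    transMatrix p π μ x' = π x' ᵥ* of fun a => p x' a μ := rfl

lemma sum_transMatrix (hp : ∀ x a, ∑ x', p x a μ x' = 1) (hπ : ∀ x, ∑ a, π x a = 1) (x' : X) :
    ∑ x, transMatrix p π μ x' x = 1 := by
  simp only [transMatrix]
  rw [sum_comm]
  simp only [← mul_sum, hp, mul_one, hπ]

omit [Fintype X] in
lemma le_transMatrix {c : ℝ} (hc : ∀ x a x', c ≤ p x a μ x') (hπ0 : ∀ x a, 0 ≤ π x a)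
    (hπ1 : ∀ x, ∑ a, π x a = 1) (x' x : X) : c ≤ transMatrix p π μ x' x :=
  calc c = ∑ a, π x' a * c := by rw [← sum_mul, hπ1, one_mul]
    _ ≤ transMatrix p π μ x' x :=
      sum_le_sum fun a _ => mul_le_mul_of_nonneg_left (hc x' a x) (hπ0 x' a)

lemma l1_transMatrix_sub_le {B : ℝ} (hπ0 : ∀ x a, 0 ≤ π x a) (hπ1 : ∀ x, ∑ a, π x a = 1)
    (hB : ∀ x a, l1 (p x a μ - p x a μ') ≤ B) (x' : X) :
    l1 (transMatrix p π μ x' - transMatrix p π μ' x') ≤ B := by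
  rw [transMatrix_apply_eq_vecMul, transMatrix_apply_eq_vecMul, ← vecMul_sub]
  refine (l1_vecMul_le _ _).trans ?_
  calc ∑ a, |π x' a| * l1 (p x' a μ - p x' a μ')
      ≤ ∑ a, π x' a * B := sum_le_sum fun a _ => by
        rw [abs_of_nonneg (hπ0 x' a)]; exact mul_le_mul_of_nonneg_left (hB x' a) (hπ0 x' a)
    _ = B := by rw [← sum_mul, hπ1, one_mul]

lemma l1_transMatrix_sub_transMatrix_le {ε : ℝ} (hp0 : ∀ x a x', 0 ≤ p x a μ x')
    (hp1 : ∀ x a, ∑ x', p x a μ x' = 1) {x' : X} (hε : ∀ a, |π x' a - π' x' a| ≤ ε) :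
    l1 (transMatrix p π μ x' - transMatrix p π' μ x') ≤ Fintype.card A * ε := by
  rw [transMatrix_apply_eq_vecMul, transMatrix_apply_eq_vecMul, ← sub_vecMul]
  refine (l1_vecMul_le _ _).trans ?_
  have hrow : ∀ a, l1 (p x' a μ) = 1 := fun a => by
    simp only [l1, abs_of_nonneg (hp0 x' a _), hp1]
  calc ∑ a, |(π x' - π' x') a| * l1 (p x' a μ) ≤ ∑ _a : A, ε :=
        sum_le_sum fun a _ => by rw [hrow, mul_one]; exact hε a
    _ = Fintype.card A * ε := by simp

lemma l1_Ppush_sub_Ppush_le_mul_l1_sub {c L : ℝ} (hμ : IsProb μ) (hμ' : IsProb μ')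
    (hπ0 : ∀ x a, 0 ≤ π x a) (hπ1 : ∀ x, ∑ a, π x a = 1) (hc : ∀ x a x', c ≤ p x a μ x')
    (hp1 : ∀ x a, ∑ x', p x a μ x' = 1) (hL : ∀ x a, l1 (p x a μ - p x a μ') ≤ L * l1 (μ - μ')) :
    l1 (Ppush p π μ μ - Ppush p π μ' μ') ≤ (L + 1 - Fintype.card X * c) * l1 (μ - μ') :=
  l1_vecMul_sub_vecMul_le_of_stochastic hμ hμ' (le_transMatrix hc hπ0 hπ1)
    (sum_transMatrix hp1 hπ1) (l1_transMatrix_sub_le hπ0 hπ1 hL)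

lemma l1_Ppush_sub_Ppush_le_card_mul {ν : X → ℝ} {ε : ℝ} (hν : IsProb ν)
    (hp0 : ∀ x a x', 0 ≤ p x a ν x') (hp1 : ∀ x a, ∑ x', p x a ν x' = 1)
    (hε : ∀ x a, |π x a - π' x a| ≤ ε) :
    l1 (Ppush p π ν ν - Ppush p π' ν ν) ≤ Fintype.card A * ε := by
  have h := l1_vecMul_sub_vecMul_le hν.1 fun x' =>
    l1_transMatrix_sub_transMatrix_le hp0 hp1 (hε x')
  rwa [hν.2, one_mul] at h

end transMatrix

theorem mfc_mu_fixed_point_general [Fintype X] [Fintype A] [Nonempty X] [Nonempty A]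
    (φ : ℝ) (hφ0 : 0 < φ)
    (p : X → A → (X → ℝ) → X → ℝ)
    (hp0 : ∀ x a μ x', IsProb μ → 0 ≤ p x a μ x')
    (hp1 : ∀ x a μ, IsProb μ → ∑ x', p x a μ x' = 1)
    (cmin Lp : ℝ)
    (hcmin : ∀ x a μ x', IsProb μ → cmin ≤ p x a μ x')
    (hLp : ∀ x a μ μ', IsProb μ → IsProb μ' →
      ∑ x', |p x a μ x' - p x a μ' x'| ≤ Lp * l1 (fun y => μ y - μ' y))
    (hLpc : Lp < (Fintype.card X : ℝ) * cmin)
    -- μ*_Q : the fixed point of μ ↦ P^{softmin_φ Q, μ} μ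
    (mustar : (X → A → ℝ) → X → ℝ)
    (hmustar : ∀ Q : X → A → ℝ, IsProb (mustar Q) ∧
      Ppush p (fun x' => softmin φ (Q x')) (mustar Q) (mustar Q) = mustar Q) :
    (∀ (Q : X → A → ℝ) (μ μ' : X → ℝ), IsProb μ → IsProb μ' →
        l1 (fun x => Ppush p (fun x' => softmin φ (Q x')) μ μ x
              - Ppush p (fun x' => softmin φ (Q x')) μ' μ' x)
          ≤ (Lp + 1 - (Fintype.card X : ℝ) * cmin) * l1 (fun x => μ x - μ' x))
    ∧ (Lp + 1 - (Fintype.card X : ℝ) * cmin < 1)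
    ∧ (∀ Q : X → A → ℝ, ∃! μ : X → ℝ, IsProb μ ∧
        Ppush p (fun x' => softmin φ (Q x')) μ μ = μ)
    ∧ (∀ Q Q' : X → A → ℝ,
        l1 (fun x => mustar Q x - mustar Q' x)
          ≤ φ * (Fintype.card A : ℝ) / ((Fintype.card X : ℝ) * cmin - Lp)
              * supQ (fun x a => Q x a - Q' x a)) := by
  set F : (X → A → ℝ) → (X → ℝ) → X → ℝ := fun Q ν => Ppush p (fun x => softmin φ (Q x)) ν ν
  have hπ (Q : X → A → ℝ) (x : X) : IsProb (softmin φ (Q x)) := softmin_isProb φ (Q x)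
  have hcontr (Q : X → A → ℝ) (μ μ' : X → ℝ) (hμ : IsProb μ) (hμ' : IsProb μ') :
      l1 (F Q μ - F Q μ') ≤ (Lp + 1 - Fintype.card X * cmin) * l1 (μ - μ') :=
    l1_Ppush_sub_Ppush_le_mul_l1_sub hμ hμ' (fun x => (hπ Q x).1) (fun x => (hπ Q x).2)
      (fun x a x' => hcmin x a μ x' hμ) (fun x a => hp1 x a μ hμ) fun x a => hLp x a μ μ' hμ hμ'
  have hpolicy (Q Q' : X → A → ℝ) (ν : X → ℝ) (hν : IsProb ν) :
      l1 (F Q ν - F Q' ν) ≤ Fintype.card A * (φ * supQ fun x a => Q x a - Q' x a) :=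
    l1_Ppush_sub_Ppush_le_card_mul hν (fun x a x' => hp0 x a ν x' hν) (fun x a => hp1 x a ν hν)
      (abs_softmin_sub_softmin_le_supQ hφ0.le Q Q')
  have hk : Lp + 1 - (Fintype.card X : ℝ) * cmin < 1 := by linarith
  refine ⟨hcontr, hk, fun Q => ⟨mustar Q, hmustar Q, fun μ hμ => ?_⟩, fun Q Q' => ?_⟩
  · refine eq_of_l1_sub_nonpos ?_
    simpa using l1_sub_le_div_of_isFixedPt (G := F Q) (ε := 0) hk
      (hcontr Q μ (mustar Q) hμ.1 (hmustar Q).1) (by simp [l1]) hμ.2 (hmustar Q).2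
  · calc l1 (mustar Q - mustar Q')
        ≤ Fintype.card A * (φ * supQ fun x a => Q x a - Q' x a)
            / (1 - (Lp + 1 - Fintype.card X * cmin)) :=
          l1_sub_le_div_of_isFixedPt hk (hcontr Q _ _ (hmustar Q).1 (hmustar Q').1)
            (hpolicy Q Q' _ (hmustar Q').1) (hmustar Q).2 (hmustar Q').2
      _ = _ := by ring

/-- for every fixed Q, the map μ ↦ P^{softmin_φ Q, μ} μ is a strict contraction
with constant L_p + 1 − |𝒳|c_min < 1, hence has a unique fixed point μ*_Q in the simplex;
moreover Q ↦ μ*_Q is (φ|𝒜|/(|𝒳|c_min − L_p))-Lipschitz. -/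
theorem mfc_mu_fixed_point [Fintype X] [Fintype A] [Nonempty X] [Nonempty A]
    (φ : ℝ) (hφ0 : 0 < φ)
    (p : X → A → (X → ℝ) → X → ℝ)
    (hp0 : ∀ x a μ x', IsProb μ → 0 ≤ p x a μ x')
    (hp1 : ∀ x a μ, IsProb μ → ∑ x', p x a μ x' = 1)
    (cmin Lp : ℝ) (hcmin0 : 0 ≤ cmin)
    (hcmin : ∀ x a μ x', IsProb μ → cmin ≤ p x a μ x')
    (hLp0 : 0 ≤ Lp)
    (hLp : ∀ x a μ μ', IsProb μ → IsProb μ' →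
      ∑ x', |p x a μ x' - p x a μ' x'| ≤ Lp * l1 (fun y => μ y - μ' y))
    (hLpc : Lp < (Fintype.card X : ℝ) * cmin)
    -- μ*_Q : the fixed point of μ ↦ P^{softmin_φ Q, μ} μ
    (mustar : (X → A → ℝ) → X → ℝ)
    (hmustar : ∀ Q : X → A → ℝ, IsProb (mustar Q) ∧
      Ppush p (fun x' => softmin φ (Q x')) (mustar Q) (mustar Q) = mustar Q) :
    (∀ (Q : X → A → ℝ) (μ μ' : X → ℝ), IsProb μ → IsProb μ' →
        l1 (fun x => Ppush p (fun x' => softmin φ (Q x')) μ μ x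
              - Ppush p (fun x' => softmin φ (Q x')) μ' μ' x)
          ≤ (Lp + 1 - (Fintype.card X : ℝ) * cmin) * l1 (fun x => μ x - μ' x))
    ∧ (Lp + 1 - (Fintype.card X : ℝ) * cmin < 1)
    ∧ (∀ Q : X → A → ℝ, ∃! μ : X → ℝ, IsProb μ ∧
        Ppush p (fun x' => softmin φ (Q x')) μ μ = μ)
    ∧ (∀ Q Q' : X → A → ℝ,
        l1 (fun x => mustar Q x - mustar Q' x)
          ≤ φ * (Fintype.card A : ℝ) / ((Fintype.card X : ℝ) * cmin - Lp)
              * supQ (fun x a => Q x a - Q' x a)) :=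
  mfc_mu_fixed_point_general φ hφ0 p hp0 hp1 cmin Lp hcmin hLp hLpc mustar hmustar
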